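/- Consider the vector field on ℝ^5 with coordinates (x, y, y1, y2, y3, y4) given by X = y*∂_x - y1^2*∂_{y1} - 3*y1*y2*∂_{y2} - (4*y1*y3 + 3*y2^2)*∂_{y3} - (5*y1*y4 + 10*y2*y3)*∂_{y4}. Define R4 = 3*y2*y4 - 5*y3^2 and R2 = y2. Then X(R4) = -8*y1*R4 and X(R2) = -3*y1*R2; consequently, on the open set where y2 ≠ 0, the function I4 = R4^3/R2^8 satisfies X(I4) = 0. -/

import Mathlib

/-!
The field `X` acts on functions as a derivation. If `X f = c a f` and `X g = c b g` (relative
invariants of weights `a` and `b` with a common multiplier `c`), then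
`X (f ^ b / g ^ a) = (b · c a − a · c b) f ^ b / g ^ a = 0`. Here `R₄` and `R₂` have weights
`8` and `3` with multiplier `−y₁`, so `I₄ = R₄³ / R₂⁸` is annihilated by `X`.
-/

namespace Stmt5

/-- Points of the jet space with coordinates `(x, y, y1, y2, y3, y4)`. -/
abbrev Pt := Fin 6 → ℝ

/-- The fourth prolongation of the point vector field `y ∂_x`:
`X = y ∂_x − y1² ∂_{y1} − 3 y1 y2 ∂_{y2} − (4 y1 y3 + 3 y2²) ∂_{y3} − (5 y1 y4 + 10 y2 y3) ∂_{y4}`.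
Coordinates: `p 0 = x, p 1 = y, p 2 = y1, p 3 = y2, p 4 = y3, p 5 = y4`. -/
def X : Pt → Pt := fun p =>
  ![p 1, 0, -(p 2) ^ 2, -3 * p 2 * p 3, -(4 * p 2 * p 4 + 3 * (p 3) ^ 2),
    -(5 * p 2 * p 5 + 10 * p 3 * p 4)]

/-- `R₄ = 3 y₂ y₄ − 5 y₃²`. -/
def R4 : Pt → ℝ := fun p => 3 * p 3 * p 5 - 5 * (p 4) ^ 2

/-- `R₂ = y₂`. -/
def R2 : Pt → ℝ := fun p => p 3

/-- `I₄ = R₄³ / R₂⁸`. -/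
noncomputable def I4 : Pt → ℝ := fun p => (R4 p) ^ 3 / (R2 p) ^ 8

end Stmt5

theorem cast_mul_pow_pred_mul (n : ℕ) (x : ℝ) : (n : ℝ) * x ^ (n - 1) * x = n * x ^ n := by
  cases n with
  | zero => simp
  | succ n => rw [mul_assoc, Nat.add_sub_cancel, ← pow_succ]

theorem fderiv_coord_apply {ι : Type*} [Fintype ι] (i : ι) (p v : ι → ℝ) :
    fderiv ℝ (fun q : ι → ℝ => q i) p v = v i := by
  rw [(hasFDerivAt_apply i p).fderiv, ContinuousLinearMap.proj_apply]

section RelativeInvariant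

variable {E : Type*} [NormedAddCommGroup E] [NormedSpace ℝ E] {f g : E → ℝ} {p v : E} {c : ℝ}
  {a b : ℕ}

theorem HasLineDerivAt.pow_div_pow_of_weights
    (hf : HasLineDerivAt ℝ f (c * a * f p) p v) (hg : HasLineDerivAt ℝ g (c * b * g p) p v)
    (hg₀ : g p ≠ 0) :
    HasLineDerivAt ℝ (fun q => f q ^ b / g q ^ a) 0 p v := by
  have hquot := (hf.pow b).fun_div (hg.pow a) (by simpa using pow_ne_zero a hg₀)
  simp only [Pi.pow_apply, zero_smul, add_zero] at hquot
  refine hquot.congr_deriv ?_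
  have hfb := cast_mul_pow_pred_mul b (f p)
  have hga := cast_mul_pow_pred_mul a (g p)
  field_simp
  linear_combination c * a * g p ^ a * hfb - c * b * f p ^ b * hga

-- Mathlib's quotient rule is stated for functions of one variable, hence the detour through
-- the line `t ↦ p + t • v`.
theorem fderiv_pow_div_pow_apply_eq_zero_of_weights
    (hf : DifferentiableAt ℝ f p) (hg : DifferentiableAt ℝ g p) (hg₀ : g p ≠ 0)
    (hfv : fderiv ℝ f p v = c * a * f p) (hgv : fderiv ℝ g p v = c * b * g p) :
    fderiv ℝ (fun q => f q ^ b / g q ^ a) p v = 0 := by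
  have hquot : DifferentiableAt ℝ (fun q => f q ^ b / g q ^ a) p := by
    simp only [div_eq_mul_inv]
    exact (hf.pow b).mul ((hg.pow a).fun_inv (pow_ne_zero a hg₀))
  rw [← hquot.lineDeriv_eq_fderiv]
  refine (HasLineDerivAt.pow_div_pow_of_weights (c := c) ?_ ?_ hg₀).lineDeriv
  · simpa [hfv] using hf.hasFDerivAt.hasLineDerivAt v
  · simpa [hgv] using hg.hasFDerivAt.hasLineDerivAt v

end RelativeInvariant

namespace Stmt5

theorem differentiable_R4 : Differentiable ℝ R4 := by
  unfold R4
  fun_prop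

theorem differentiable_R2 : Differentiable ℝ R2 := by
  unfold R2
  fun_prop

theorem fderiv_R4_apply (p v : Pt) :
    fderiv ℝ R4 p v = 3 * v 3 * p 5 + 3 * p 3 * v 5 - 10 * p 4 * v 4 := by
  unfold R4
  rw [fderiv_fun_sub (by fun_prop) (by fun_prop), fderiv_fun_mul (by fun_prop) (by fun_prop),
    fderiv_const_mul (by fun_prop), fderiv_const_mul (by fun_prop), fderiv_fun_pow _ (by fun_prop)]
  simp only [sub_apply, add_apply, smul_apply, smul_eq_mul, fderiv_coord_apply]
  push_cast
  ring

theorem fderiv_R2_apply (p v : Pt) : fderiv ℝ R2 p v = v 3 :=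
  fderiv_coord_apply 3 p v

theorem relative_invariants_saff2 (p : Pt) :
    fderiv ℝ R4 p (X p) = -8 * p 2 * R4 p ∧
    fderiv ℝ R2 p (X p) = -3 * p 2 * R2 p ∧
    (p 3 ≠ 0 → fderiv ℝ I4 p (X p) = 0) := by
  have hR4 : fderiv ℝ R4 p (X p) = -8 * p 2 * R4 p := by
    rw [fderiv_R4_apply]
    simp only [X, R4, Matrix.cons_val]
    ring
  have hR2 : fderiv ℝ R2 p (X p) = -3 * p 2 * R2 p := fderiv_R2_apply p (X p)
  refine ⟨hR4, hR2, fun hp => ?_⟩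
  exact fderiv_pow_div_pow_apply_eq_zero_of_weights (c := -p 2) (a := 8) (b := 3)
    differentiable_R4.differentiableAt differentiable_R2.differentiableAt hp
    (by rw [hR4]; push_cast; ring) (by rw [hR2]; push_cast; ring)

end Stmt5
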